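/- arXiv:1510.08743 — 6 statements merged into one kernel-verified Lean document; each statement's English description precedes it below -/
import Mathlib

section
/- Let K be a field, let d ≥ 1, let D be a d×d diagonal matrix over K, and let P be the permutation matrix of a permutation τ of {0,…,d−1} that is a single d-cycle (i.e., τ is a cycle whose support is all of {0,…,d−1}). Then the characteristic polynomial of the product D·P equals X^d + (−1)^d·det(D·P); that is, charpoly(D·P) = X^d + C((−1)^d · det(D·P)) in K[X]. -/
open Polynomial Matrix

lemma aux_perm {d : ℕ} (τ σ : Equiv.Perm (Fin d)) (hτ : τ.IsCycle)
    (hfix : ∀ j, τ j ≠ j) (h : ∀ j, σ j = j ∨ σ j = τ j) : σ = 1 ∨ σ = τ := by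
  by_cases h1 : σ = 1
  · exact Or.inl h1
  · right
    obtain ⟨x, hx⟩ : ∃ x, σ x ≠ x := by
      by_contra hc
      push_neg at hc
      exact h1 (Equiv.ext hc)
    have hx' : σ x = τ x := (h x).resolve_left hx
    have step : ∀ z, σ z = τ z → σ (τ z) = τ (τ z) := by
      intro z hz
      rcases h (τ z) with h' | h'
      · exfalso
        apply hfix z
        have : σ (τ z) = σ z := by rw [h', hz]
        exact σ.injective this
      · exact h'
    have pow : ∀ n : ℕ, σ ((τ ^ n) x) = τ ((τ ^ n) x) := by
      intro n
      induction n with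
      | zero => simpa using hx'
      | succ n ih =>
        have := step _ ih
        simpa [pow_succ', Equiv.Perm.mul_apply] using this
    refine Equiv.ext fun y => ?_
    obtain ⟨n, hn⟩ := hτ.exists_pow_eq (hfix x) (hfix y)
    rw [← hn]; exact pow n

/-- Lemma 6.4 of the paper: if `D` is a `d × d` diagonal matrix and `P` is the permutation
matrix of a `d`-cycle `τ`, then the characteristic polynomial of `D * P` is
`X ^ d + (-1) ^ d * det (D * P)`. -/
theorem charpoly_diagonal_mul_cycle_permMatrix
    {K : Type*} [Field K] (d : ℕ) (hd : 1 ≤ d)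
    (dv : Fin d → K) (τ : Equiv.Perm (Fin d))
    (hτ : τ.IsCycle) (hsupp : τ.support = Finset.univ) :
    (Matrix.diagonal dv * Matrix.of (fun i j => if i = τ j then (1 : K) else 0)).charpoly
      = X ^ d + C ((-1 : K) ^ d *
          (Matrix.diagonal dv * Matrix.of (fun i j => if i = τ j then (1 : K) else 0)).det) := by
  classical
  have hfix : ∀ j, τ j ≠ j := fun j =>
    Equiv.Perm.mem_support.mp (by rw [hsupp]; exact Finset.mem_univ j)
  set M : Matrix (Fin d) (Fin d) K :=
    Matrix.diagonal dv * Matrix.of (fun i j => if i = τ j then (1 : K) else 0) with hMdef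
  have hM : ∀ i j, M i j = if i = τ j then dv i else 0 := by
    intro i j
    simp [hMdef, Matrix.diagonal_mul, mul_ite]
  -- P is permMatrix of τ⁻¹
  have hP : (Matrix.of (fun i j => if i = τ j then (1 : K) else 0)) = (τ⁻¹).permMatrix K := by
    ext i j
    simp only [Equiv.Perm.permMatrix, PEquiv.toMatrix_apply, Equiv.toPEquiv,
      Matrix.of_apply, Option.mem_def, Option.some.injEq, PEquiv.coe_mk]
    congr 1
    rw [eq_iff_iff]
    simp only [Function.comp_apply, Option.some.injEq]
    rw [Equiv.Perm.inv_eq_iff_eq, eq_comm]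
  have hdet : M.det = (Equiv.Perm.sign τ : ℤ) * ∏ i, dv i := by
    rw [hMdef, Matrix.det_mul, Matrix.det_diagonal, hP, Matrix.det_permutation]
    simp [mul_comm]
  -- term computations
  have hτne1 : τ ≠ 1 := fun h => hfix ⟨0, hd⟩ (by rw [h]; rfl)
  have hzero : ∀ σ : Equiv.Perm (Fin d), σ ≠ 1 → σ ≠ τ →
      (∏ j, (charmatrix M) (σ j) j) = 0 := by
    intro σ hσ1 hστ
    obtain ⟨j, hj1, hj2⟩ : ∃ j, σ j ≠ j ∧ σ j ≠ τ j := by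
      by_contra hc
      push_neg at hc
      have : ∀ j, σ j = j ∨ σ j = τ j := by
        intro j
        by_cases h' : σ j = j
        · exact Or.inl h'
        · exact Or.inr (hc j h')
      rcases aux_perm τ σ hτ hfix this with h | h
      · exact hσ1 h
      · exact hστ h
    apply Finset.prod_eq_zero (Finset.mem_univ j)
    rw [charmatrix_apply_ne _ _ _ hj1, hM]
    simp [hj2]
  have key : M.charpoly =
      (Equiv.Perm.sign (1 : Equiv.Perm (Fin d))) • (∏ j, (charmatrix M) ((1 : Equiv.Perm (Fin d)) j) j)
      + (Equiv.Perm.sign τ) • (∏ j, (charmatrix M) (τ j) j) := by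
    rw [Matrix.charpoly, Matrix.det_apply]
    rw [← Finset.sum_subset (Finset.subset_univ ({1, τ} : Finset (Equiv.Perm (Fin d))))]
    · rw [Finset.sum_pair hτne1.symm]
    · intro σ _ hσ
      simp only [Finset.mem_insert, Finset.mem_singleton, not_or] at hσ
      rw [hzero σ hσ.1 hσ.2, smul_zero]
  have h1 : (∏ j, (charmatrix M) ((1 : Equiv.Perm (Fin d)) j) j) = X ^ d := by
    have he : ∀ j ∈ Finset.univ, (charmatrix M) ((1 : Equiv.Perm (Fin d)) j) j = X := by
      intro j _
      have : ((1 : Equiv.Perm (Fin d)) j) = j := rfl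
      rw [this, charmatrix_apply_eq, hM, if_neg (Ne.symm (hfix j))]
      simp
    rw [Finset.prod_congr rfl he, Finset.prod_const, Finset.card_univ, Fintype.card_fin]
  have hterm : (∏ j, (charmatrix M) (τ j) j) = C ((-1 : K) ^ d * ∏ i, dv i) := by
    have he : ∀ j ∈ Finset.univ, (charmatrix M) (τ j) j = C (-dv (τ j)) := by
      intro j _
      rw [charmatrix_apply_ne _ _ _ (hfix j), hM, if_pos rfl, map_neg]
    rw [Finset.prod_congr rfl he, ← map_prod]
    congr 1
    calc (∏ j, -dv (τ j)) = ∏ j, (-1) * dv (τ j) := by simp [neg_one_mul]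
      _ = (-1 : K) ^ d * ∏ j, dv (τ j) := by
          rw [Finset.prod_mul_distrib, Finset.prod_const, Finset.card_univ, Fintype.card_fin]
      _ = (-1 : K) ^ d * ∏ i, dv i := by rw [Equiv.prod_comp τ dv]
  rw [show (Matrix.diagonal dv * Matrix.of (fun i j => if i = τ j then (1 : K) else 0)).charpoly
      = M.charpoly from rfl, key, h1, hterm, Equiv.Perm.sign_one, one_smul]
  congr 1
  rcases Int.units_eq_one_or (Equiv.Perm.sign τ) with h | h <;>
    rw [h] <;> rw [hdet, h] <;> push_cast <;>
    simp [_root_.map_mul, map_pow, map_neg, _root_.map_one, mul_comm, mul_left_comm]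
end

section
/- Let K be a field of characteristic zero, let q be a positive integer, and let σ be an invertible n×n matrix over K of finite order such that σ is conjugate in GL_n(K) to σ^q (i.e., there exists Φ ∈ GL_n(K) with Φ·σ·Φ⁻¹ = σ^q). Then det(1 + σ + σ² + ⋯ + σ^{q−1}) = q^m, where m is the dimension of the kernel of σ − 1 acting on K^n (equivalently, the dimension of the fixed space of σ). -/
open Matrix

section Aux

variable {K : Type*} [Field K]

private lemma det_prodMap_aux {V W : Type*} [AddCommGroup V] [Module K V]
    [AddCommGroup W] [Module K W] [FiniteDimensional K V] [FiniteDimensional K W]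
    (g : V →ₗ[K] V) (h : W →ₗ[K] W) :
    LinearMap.det (g.prodMap h) = LinearMap.det g * LinearMap.det h := by
  let b₁ := Module.finBasis K V
  let b₂ := Module.finBasis K W
  rw [← LinearMap.det_toMatrix (b₁.prod b₂), ← LinearMap.det_toMatrix b₁ g,
    ← LinearMap.det_toMatrix b₂ h, LinearMap.toMatrix_prodMap,
    Matrix.det_fromBlocks_zero₂₁]

private lemma det_one_add_smul_idem {V : Type*} [AddCommGroup V] [Module K V]
    [FiniteDimensional K V] (f : V →ₗ[K] V) (hf : f ∘ₗ f = f) (c : K) :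
    LinearMap.det (LinearMap.id + c • f)
      = (1 + c) ^ Module.finrank K (LinearMap.range f) := by
  have hproj : LinearMap.IsProj (LinearMap.range f) f :=
    ⟨fun x => LinearMap.mem_range_self f x, fun x hx => by
      obtain ⟨y, rfl⟩ := hx; exact DFunLike.congr_fun hf y⟩
  set e := (LinearMap.range f).prodEquivOfIsCompl (LinearMap.ker f) hproj.isCompl with he
  have h0 : f = e.conj (LinearMap.prodMap LinearMap.id 0) := hproj.eq_conj_prodMap
  have h2 : LinearMap.prodMap (LinearMap.id + c • LinearMap.id)
      (LinearMap.id : LinearMap.ker f →ₗ[K] LinearMap.ker f)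
      = LinearMap.id + c • LinearMap.prodMap
          (LinearMap.id : LinearMap.range f →ₗ[K] LinearMap.range f)
          (0 : LinearMap.ker f →ₗ[K] LinearMap.ker f) := by
    ext x <;> simp
  have key : LinearMap.id + c • f
      = e.conj (LinearMap.prodMap (LinearMap.id + c • LinearMap.id) LinearMap.id) := by
    rw [h2, map_add, _root_.map_smul, LinearEquiv.conj_id, ← h0]
  rw [key, LinearEquiv.conj_apply, LinearMap.comp_assoc,
    LinearMap.det_conj, det_prodMap_aux, LinearMap.det_id, mul_one]
  have h3 : (LinearMap.id + c • LinearMap.id :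
      LinearMap.range f →ₗ[K] LinearMap.range f) = (1 + c) • LinearMap.id := by
    rw [add_smul, one_smul]
  rw [h3, LinearMap.det_smul, LinearMap.det_id, mul_one]

private lemma sum_mulVec_aux {ι : Type*} {m : Type*} [Fintype m]
    (s : Finset ι) (f : ι → Matrix m m K) (v : m → K) :
    (∑ i ∈ s, f i) *ᵥ v = ∑ i ∈ s, f i *ᵥ v := by
  classical
  induction s using Finset.cons_induction with
  | empty => simp [Matrix.zero_mulVec]
  | cons a s ha ih => rw [Finset.sum_cons, Finset.sum_cons, Matrix.add_mulVec, ih]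

end Aux

/-- Equation (1) of Theorem 6.2 of the paper (matrix form): if `K` has characteristic zero,
`σ` is an `n × n` matrix of finite order which is conjugate in `GL_n(K)` to `σ ^ q`
(via some invertible `Φ`), then `det (1 + σ + ⋯ + σ^{q-1}) = q ^ m` where
`m = dim ker (σ - 1)`. -/
theorem det_sum_pow_eq_q_pow_dim_fixed
    {K : Type*} [Field K] [CharZero K] (n q : ℕ) (hq : 0 < q)
    (σ Φ : Matrix (Fin n) (Fin n) K)
    (hfin : ∃ m : ℕ, 0 < m ∧ σ ^ m = 1)
    (hΦ : IsUnit Φ)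
    (hconj : Φ * σ = σ ^ q * Φ) :
    (∑ i ∈ Finset.range q, σ ^ i).det
      = (q : K) ^ (Module.finrank K (LinearMap.ker (σ - 1).mulVecLin)) := by
  classical
  -- basic order facts
  have hord : IsOfFinOrder σ := by
    obtain ⟨m, hm, h1⟩ := hfin
    exact isOfFinOrder_iff_pow_eq_one.mpr ⟨m, hm, h1⟩
  set N := orderOf σ with hNdef
  have hN : 0 < N := hord.orderOf_pos
  haveI : NeZero N := ⟨hN.ne'⟩
  have hσN : σ ^ N = 1 := pow_orderOf_eq_one σ
  have hNK : (N : K) ≠ 0 := Nat.cast_ne_zero.mpr hN.ne'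
  -- inverse of Φ
  have hΦd : IsUnit Φ.det := (Matrix.isUnit_iff_isUnit_det Φ).mp hΦ
  have hΦi : Φ * Φ⁻¹ = 1 := Matrix.mul_nonsing_inv Φ hΦd
  -- conjugation of powers
  have hpowconj : ∀ k : ℕ, Φ * σ ^ k = (σ ^ q) ^ k * Φ := by
    intro k
    induction k with
    | zero => simp
    | succ k ih =>
      rw [pow_succ, ← mul_assoc, ih, mul_assoc, hconj, pow_succ, mul_assoc]
  -- order of σ^q equals N, hence q is coprime to N
  have hoq : orderOf (σ ^ q) = N := by
    refine orderOf_eq_orderOf_iff.mpr fun k => ⟨fun hk => ?_, fun hk => ?_⟩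
    · have h1 : Φ * σ ^ k = Φ * 1 := by rw [hpowconj k, hk, one_mul, mul_one]
      exact hΦ.mul_left_cancel h1
    · rw [← pow_mul, mul_comm, pow_mul, hk, one_pow]
  have hco : Nat.Coprime q N := by
    have h1 : orderOf (σ ^ q) = N / Nat.gcd N q := orderOf_pow' σ hq.ne'
    rw [hoq] at h1
    have h2 : Nat.gcd N q = 1 := (Nat.div_eq_self.mp h1.symm).resolve_left hN.ne'
    exact Nat.coprime_comm.mp h2
  -- the averaging projector
  set P : Matrix (Fin n) (Fin n) K := (N : K)⁻¹ • ∑ i ∈ Finset.range N, σ ^ i with hPdef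
  have hshift : ∑ i ∈ Finset.range N, σ ^ (i + 1) = ∑ i ∈ Finset.range N, σ ^ i := by
    have h1 := Finset.sum_range_succ' (fun i => σ ^ i) N
    rw [Finset.sum_range_succ (fun i => σ ^ i) N] at h1
    rw [pow_zero, hσN] at h1
    exact (add_right_cancel h1).symm
  have hmulsum : σ * ∑ i ∈ Finset.range N, σ ^ i = ∑ i ∈ Finset.range N, σ ^ i := by
    rw [Finset.mul_sum]
    calc ∑ i ∈ Finset.range N, σ * σ ^ i
        = ∑ i ∈ Finset.range N, σ ^ (i + 1) :=
          Finset.sum_congr rfl fun i _ => (pow_succ' σ i).symm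
      _ = ∑ i ∈ Finset.range N, σ ^ i := hshift
  have hsummul : (∑ i ∈ Finset.range N, σ ^ i) * σ = ∑ i ∈ Finset.range N, σ ^ i := by
    rw [Finset.sum_mul]
    calc ∑ i ∈ Finset.range N, σ ^ i * σ
        = ∑ i ∈ Finset.range N, σ ^ (i + 1) :=
          Finset.sum_congr rfl fun i _ => (pow_succ σ i).symm
      _ = ∑ i ∈ Finset.range N, σ ^ i := hshift
  have hσP : σ * P = P := by rw [hPdef, mul_smul_comm, hmulsum]
  have hPσ : P * σ = P := by rw [hPdef, smul_mul_assoc, hsummul]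
  have hpowP : ∀ k : ℕ, σ ^ k * P = P := by
    intro k
    induction k with
    | zero => rw [pow_zero, one_mul]
    | succ k ih => rw [pow_succ, mul_assoc, hσP, ih]
  have hPP : P * P = P := by
    rw [hPdef, smul_mul_assoc, Finset.sum_mul]
    have h1 : ∀ i ∈ Finset.range N, σ ^ i * ((N : K)⁻¹ • ∑ j ∈ Finset.range N, σ ^ j)
        = (N : K)⁻¹ • ∑ j ∈ Finset.range N, σ ^ j := fun i _ => hpowP i
    rw [Finset.sum_congr rfl h1, Finset.sum_const, Finset.card_range,
      ← Nat.cast_smul_eq_nsmul K, smul_smul, inv_mul_cancel₀ hNK, one_smul]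
  have hAP : (σ - 1) * P = 0 := by rw [sub_mul, one_mul, hσP, sub_self]
  have hPA : P * (σ - 1) = 0 := by rw [mul_sub, mul_one, hPσ, sub_self]
  -- fixed vectors
  have hfixP : ∀ v : Fin n → K, σ *ᵥ v = v → P *ᵥ v = v := by
    intro v hv
    have hpow : ∀ k : ℕ, σ ^ k *ᵥ v = v := by
      intro k
      induction k with
      | zero => rw [pow_zero, Matrix.one_mulVec]
      | succ k ih => rw [pow_succ, ← Matrix.mulVec_mulVec, hv, ih]
    rw [hPdef, Matrix.smul_mulVec, sum_mulVec_aux,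
      Finset.sum_congr rfl fun i _ => hpow i, Finset.sum_const, Finset.card_range,
      ← Nat.cast_smul_eq_nsmul K, smul_smul, inv_mul_cancel₀ hNK, one_smul]
  -- Φ commutes with P
  have hqi : ∀ i : ℕ, Φ * σ ^ i = σ ^ (q * i) * Φ := by
    intro i; rw [hpowconj i, ← pow_mul]
  have hval : ∀ k : ℕ, σ ^ k = σ ^ ((k : ZMod N)).val := by
    intro k
    rw [ZMod.val_natCast]
    exact (pow_mod_orderOf σ k).symm
  have hbij : ∀ g : ZMod N → Matrix (Fin n) (Fin n) K,
      ∑ i ∈ Finset.range N, g ((i : ℕ) : ZMod N) = ∑ j : ZMod N, g j := by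
    intro g
    refine Finset.sum_nbij' (fun i => ((i : ℕ) : ZMod N)) (fun j => j.val) ?_ ?_ ?_ ?_ ?_
    · intro a _; exact Finset.mem_univ _
    · intro a _; exact Finset.mem_range.mpr a.val_lt
    · intro a ha; exact ZMod.val_natCast_of_lt (Finset.mem_range.mp ha)
    · intro a _; exact ZMod.natCast_zmod_val a
    · intro a _; rfl
  have hsum_q : ∑ i ∈ Finset.range N, σ ^ (q * i) = ∑ i ∈ Finset.range N, σ ^ i := by
    set u := ZMod.unitOfCoprime q hco with hu
    have hcu : ((u : (ZMod N)ˣ) : ZMod N) = (q : ZMod N) := ZMod.coe_unitOfCoprime q hco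
    calc ∑ i ∈ Finset.range N, σ ^ (q * i)
        = ∑ i ∈ Finset.range N, σ ^ ((q : ZMod N) * ((i : ℕ) : ZMod N)).val := by
          refine Finset.sum_congr rfl fun i _ => ?_
          rw [hval (q * i), Nat.cast_mul]
      _ = ∑ j : ZMod N, σ ^ ((q : ZMod N) * j).val :=
          hbij (fun j => σ ^ ((q : ZMod N) * j).val)
      _ = ∑ j : ZMod N, σ ^ j.val := by
          refine Fintype.sum_equiv (Units.mulLeft u) _ _ fun j => ?_
          simp [Units.mulLeft, hcu]
      _ = ∑ i ∈ Finset.range N, σ ^ i := by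
          rw [← hbij (fun j => σ ^ j.val)]
          exact Finset.sum_congr rfl fun i _ => (hval i).symm
  have hΦP : Φ * P = P * Φ := by
    rw [hPdef, mul_smul_comm, smul_mul_assoc, Finset.mul_sum, Finset.sum_mul]
    congr 1
    calc ∑ i ∈ Finset.range N, Φ * σ ^ i
        = ∑ i ∈ Finset.range N, σ ^ (q * i) * Φ := Finset.sum_congr rfl fun i _ => hqi i
      _ = (∑ i ∈ Finset.range N, σ ^ (q * i)) * Φ := by rw [Finset.sum_mul]
      _ = ∑ i ∈ Finset.range N, σ ^ i * Φ := by rw [hsum_q, Finset.sum_mul]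
  -- the geometric sum S
  set S : Matrix (Fin n) (Fin n) K := ∑ i ∈ Finset.range q, σ ^ i with hSdef
  set c : K := (q : K) - 1 with hcdef
  set D : Matrix (Fin n) (Fin n) K := (σ - 1) + P with hDdef
  have hSP : S * P = (q : K) • P := by
    rw [hSdef, Finset.sum_mul, Finset.sum_congr rfl fun i _ => hpowP i,
      Finset.sum_const, Finset.card_range, ← Nat.cast_smul_eq_nsmul K]
  have hSA : S * (σ - 1) = σ ^ q - 1 := geom_sum_mul σ q
  -- factorization
  have hfactor : (σ - 1) + (q : K) • P = D * (1 + c • P) := by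
    symm
    calc D * (1 + c • P)
        = (σ - 1) * 1 + (σ - 1) * (c • P) + (P * 1 + P * (c • P)) := by
          rw [hDdef, add_mul, mul_add, mul_add]
      _ = (σ - 1) + c • ((σ - 1) * P) + (P + c • (P * P)) := by
          rw [mul_one, mul_one, mul_smul_comm c (σ - 1) P, mul_smul_comm c P P]
      _ = (σ - 1) + (P + ((q : K) • P - P)) := by
          rw [hAP, hPP, smul_zero, add_zero, hcdef, sub_smul, one_smul]
      _ = (σ - 1) + (q : K) • P := by abel
  -- the key determinant identity
  have hmain : S.det * D.det = D.det * (1 + c • P).det := by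
    have hSD : S * D = Φ * ((σ - 1) + (q : K) • P) * Φ⁻¹ := by
      have h1 : Φ * (σ - 1) * Φ⁻¹ = σ ^ q - 1 := by
        rw [mul_sub, mul_one, sub_mul, hconj, mul_assoc, hΦi, mul_one]
      have h2 : Φ * ((q : K) • P) * Φ⁻¹ = (q : K) • P := by
        rw [mul_smul_comm, smul_mul_assoc, mul_assoc]
        rw [← mul_assoc Φ P, hΦP, mul_assoc, hΦi, mul_one]
      calc S * D = S * (σ - 1) + S * P := by rw [hDdef, mul_add]
        _ = (σ ^ q - 1) + (q : K) • P := by rw [hSA, hSP]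
        _ = Φ * (σ - 1) * Φ⁻¹ + Φ * ((q : K) • P) * Φ⁻¹ := by rw [h1, h2]
        _ = Φ * ((σ - 1) + (q : K) • P) * Φ⁻¹ := by rw [mul_add, add_mul]
    calc S.det * D.det = (S * D).det := (Matrix.det_mul S D).symm
      _ = ((σ - 1) + (q : K) • P).det := by rw [hSD, Matrix.det_conj hΦ]
      _ = (D * (1 + c • P)).det := by rw [hfactor]
      _ = D.det * (1 + c • P).det := Matrix.det_mul _ _
  -- D is invertible
  have hDdet : D.det ≠ 0 := by
    intro h0
    obtain ⟨v, hv0, hv⟩ := Matrix.exists_mulVec_eq_zero_iff.mpr h0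
    have hPD : P * D = P := by rw [hDdef, mul_add, hPA, hPP, zero_add]
    have hPv : P *ᵥ v = 0 := by
      have h1 : P *ᵥ (D *ᵥ v) = 0 := by rw [hv, Matrix.mulVec_zero]
      rwa [Matrix.mulVec_mulVec, hPD] at h1
    have hAv : (σ - 1) *ᵥ v = 0 := by
      have h1 : (σ - 1) *ᵥ v + P *ᵥ v = 0 := by
        rw [← Matrix.add_mulVec, ← hDdef, hv]
      rwa [hPv, add_zero] at h1
    have hfix : σ *ᵥ v = v := by
      rw [Matrix.sub_mulVec, Matrix.one_mulVec, sub_eq_zero] at hAv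
      exact hAv
    have : v = 0 := by rw [← hfixP v hfix, hPv]
    exact hv0 this
  -- kernel of σ - 1 is the range of P
  have hker : LinearMap.ker (σ - 1).mulVecLin = LinearMap.range P.mulVecLin := by
    ext x
    simp only [LinearMap.mem_ker, LinearMap.mem_range, Matrix.mulVecLin_apply]
    constructor
    · intro hx
      have hfix : σ *ᵥ x = x := by
        rw [Matrix.sub_mulVec, Matrix.one_mulVec, sub_eq_zero] at hx
        exact hx
      exact ⟨x, hfixP x hfix⟩
    · rintro ⟨y, rfl⟩
      rw [Matrix.mulVec_mulVec, hAP, Matrix.zero_mulVec]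
  -- determinant of 1 + c • P
  have hidem : P.mulVecLin ∘ₗ P.mulVecLin = P.mulVecLin := by
    rw [← Matrix.mulVecLin_mul, hPP]
  have hdet1 : (1 + c • P).det
      = (q : K) ^ Module.finrank K (LinearMap.range P.mulVecLin) := by
    have h1 : Matrix.toLin' (1 + c • P)
        = LinearMap.id + c • P.mulVecLin := by
      rw [map_add, _root_.map_smul, Matrix.toLin'_one, Matrix.toLin'_apply']
    have h2 := det_one_add_smul_idem (K := K) P.mulVecLin hidem c
    rw [← LinearMap.det_toLin' (1 + c • P), h1, h2, hcdef]
    norm_num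
  -- conclude
  have hfinal : S.det = (1 + c • P).det := by
    have h1 : S.det * D.det = (1 + c • P).det * D.det := by
      rw [hmain, mul_comm]
    exact mul_right_cancel₀ hDdet h1
  rw [hfinal, hdet1, hker]
end

section
/- Let K be an algebraically closed field of characteristic zero, let q be a positive integer, and let σ, Φ ∈ GL_n(K) with σ of finite order and Φ·σ·Φ⁻¹ = σ^q. Assume that K^n is semisimple as a module over the subgroup G of GL_n(K) generated by σ and Φ (equivalently, over the group algebra K[G]). Let W = ker(σ − 1) ⊆ K^n; then W is Φ-invariant, and, writing Φ_W for the restriction of Φ to W, the following identity holds in the polynomial ring K[X]: det(1 − X·Φ) · det(1 − (q·X)·Φ_W) = det(1 − X·(1 + σ + ⋯ + σ^{q−1})·Φ) · det(1 − X·Φ_W). -/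
/-!
On `W = ker (σ - 1)` every power of `σ` is the identity, so `N = 1 + σ + ⋯ + σ^(q-1)` acts as `q`
and `N Φ` restricts to `q • Φ_W`. On a `σ`- and `Φ`-stable complement `W'` of `W` the map `σ - 1`
is invertible, and `(σ - 1) N Φ = (σ^q - 1) Φ = Φ (σ - 1)`, so `N Φ` and `Φ` are conjugate on `W'`.
Splitting both characteristic polynomials along `W ⊕ W'` gives the identity. That `Φ` preserves
`W` at all comes from `Φ⁻¹` preserving it, since `W` is finite-dimensional.
-/

open Matrix Polynomial LinearMap Module.End

theorem Matrix.charpolyRev_smul {R n : Type*} [CommRing R] [Fintype n] [DecidableEq n]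
    (a : R) (M : Matrix n n R) :
    (a • M).charpolyRev = M.charpolyRev.comp (C a * X) := by
  rw [charpolyRev, charpolyRev, Polynomial.comp, ← coe_eval₂RingHom, RingHom.map_det]
  congr 1
  ext i j : 1
  simp only [RingHom.mapMatrix_apply, map_apply, Matrix.sub_apply, Matrix.smul_apply, one_apply,
    coe_eval₂RingHom, apply_ite, eval₂_sub, eval₂_one, eval₂_zero, eval₂_mul, eval₂_C, eval₂_X,
    smul_eq_mul, C_mul]
  ring

theorem LinearMap.charpolyRev_toMatrix {R M ι : Type*} [CommRing R] [AddCommGroup M] [Module R M]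
    [Module.Free R M] [Module.Finite R M] [Fintype ι] [DecidableEq ι]
    (b : Module.Basis ι R M) (f : M →ₗ[R] M) :
    (toMatrix b b f).charpolyRev = f.charpoly.reverse := by
  rw [← reverse_charpoly, charpoly_toMatrix]

theorem Matrix.charpolyRev_eq_reverse_charpoly_mulVecLin {R n : Type*} [CommRing R]
    [Fintype n] [DecidableEq n] (A : Matrix n n R) :
    A.charpolyRev = A.mulVecLin.charpoly.reverse := by
  rw [← reverse_charpoly, charpoly_mulVecLin]

theorem sub_one_mul_geom_sum_mul_of_mul_eq_pow_mul {R : Type*} [Ring R] {a b : R} {q : ℕ}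
    (h : b * a = a ^ q * b) :
    (a - 1) * ((∑ i ∈ Finset.range q, a ^ i) * b) = b * (a - 1) := by
  rw [← mul_assoc, mul_geom_sum, sub_mul, one_mul, ← h, mul_sub, mul_one]

namespace Module.End

section CommRing

variable {R M : Type*} [CommRing R] [AddCommGroup M] [Module R M] {σ : Module.End R M}

theorem mem_ker_sub_one_iff {x : M} : x ∈ ker (σ - 1) ↔ σ x = x := by
  rw [mem_ker, LinearMap.sub_apply, one_apply, sub_eq_zero]

theorem mapsTo_ker_sub_one_self : ∀ x ∈ ker (σ - 1), σ x ∈ ker (σ - 1) :=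
  fun _ hx => (mem_ker_sub_one_iff.1 hx).symm ▸ hx

theorem pow_apply_of_mem_ker_sub_one {x : M} (hx : x ∈ ker (σ - 1)) (i : ℕ) : (σ ^ i) x = x := by
  rw [coe_pow]
  exact Function.iterate_fixed (mem_ker_sub_one_iff.1 hx) i

theorem geom_sum_apply_of_mem_ker_sub_one {x : M} (hx : x ∈ ker (σ - 1)) (q : ℕ) :
    (∑ i ∈ Finset.range q, σ ^ i) x = (q : R) • x := by
  simp [LinearMap.sum_apply, pow_apply_of_mem_ker_sub_one hx, Nat.cast_smul_eq_nsmul]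

theorem pow_mapsTo {p : Submodule R M} (hp : ∀ x ∈ p, σ x ∈ p) (i : ℕ) :
    ∀ x ∈ p, (σ ^ i) x ∈ p := by
  rw [coe_pow]
  exact fun x hx => Set.MapsTo.iterate hp i hx

end CommRing

variable {K V : Type*} [Field K] [AddCommGroup V] [Module K V] [FiniteDimensional K V]

theorem _root_.Submodule.map_eq_of_injective_of_map_le {f : V →ₗ[K] V}
    (hf : Function.Injective f) {p : Submodule K V} (h : p.map f ≤ p) : p.map f = p :=
  Submodule.eq_of_le_of_finrank_eq h (LinearEquiv.finrank_eq (p.equivMapOfInjective f hf)).symm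

theorem _root_.LinearMap.charpoly_eq_mul_of_isCompl {p p' : Submodule K V} (h : IsCompl p p')
    (f : Module.End K V) (hp : ∀ x ∈ p, f x ∈ p) (hp' : ∀ x ∈ p', f x ∈ p') :
    f.charpoly = (f.restrict hp).charpoly * (f.restrict hp').charpoly := by
  rw [← charpoly_prodMap, ← LinearEquiv.charpoly_conj (Submodule.prodEquivOfIsCompl p p' h)]
  congr 1
  ext v
  obtain ⟨⟨a, b⟩, rfl⟩ := (Submodule.prodEquivOfIsCompl p p' h).surjective v
  simp [LinearEquiv.conj_apply]

theorem _root_.LinearMap.charpoly_eq_of_comp_eq_comp {f g s : Module.End K V}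
    (hs : Function.Injective s) (h : s ∘ₗ f = g ∘ₗ s) : f.charpoly = g.charpoly := by
  set e := LinearEquiv.ofInjectiveEndo s hs
  have hg : e.conj f = g := by
    ext v
    obtain ⟨w, rfl⟩ := e.surjective v
    rw [LinearEquiv.conj_apply_apply, LinearEquiv.symm_apply_apply]
    simpa [e] using LinearMap.congr_fun h w
  rw [← hg, LinearEquiv.charpoly_conj]

variable {σ Φ : Module.End K V} {q : ℕ}

theorem mapsTo_ker_sub_one_of_mul_eq_pow_mul (hΦ : IsUnit Φ) (h : Φ * σ = σ ^ q * Φ) :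
    ∀ x ∈ ker (σ - 1), Φ x ∈ ker (σ - 1) := by
  obtain ⟨u, rfl⟩ := hΦ
  have hinv : σ * ↑u⁻¹ = ↑u⁻¹ * σ ^ q := by
    rw [Units.eq_inv_mul_iff_mul_eq, ← mul_assoc, h, mul_assoc, Units.mul_inv, mul_one]
  have hmap : (ker (σ - 1)).map (↑u⁻¹ : Module.End K V) ≤ ker (σ - 1) := by
    rintro _ ⟨x, hx, rfl⟩
    rw [mem_ker_sub_one_iff, ← mul_apply, hinv, mul_apply, pow_apply_of_mem_ker_sub_one hx]
  intro x hx
  rw [← Submodule.map_eq_of_injective_of_map_le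
    ((Module.End.isUnit_iff _).1 u⁻¹.isUnit).injective hmap] at hx
  obtain ⟨y, hy, rfl⟩ := hx
  rwa [← mul_apply, Units.mul_inv, one_apply]

theorem charpoly_mul_charpoly_smul_restrict_ker_sub_one (h : Φ * σ = σ ^ q * Φ)
    (hW : ∀ x ∈ ker (σ - 1), Φ x ∈ ker (σ - 1)) {W' : Submodule K V}
    (hcompl : IsCompl (ker (σ - 1)) W') (hσW' : ∀ x ∈ W', σ x ∈ W')
    (hΦW' : ∀ x ∈ W', Φ x ∈ W') :
    Φ.charpoly * ((q : K) • Φ.restrict hW).charpoly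
      = ((∑ i ∈ Finset.range q, σ ^ i) * Φ).charpoly * (Φ.restrict hW).charpoly := by
  set N := ∑ i ∈ Finset.range q, σ ^ i
  have hfix : ∀ x ∈ ker (σ - 1), (N * Φ) x = (q : K) • Φ x := fun x hx =>
    geom_sum_apply_of_mem_ker_sub_one (hW x hx) q
  have hNW : ∀ x ∈ ker (σ - 1), (N * Φ) x ∈ ker (σ - 1) := fun x hx => by
    rw [hfix x hx]
    exact Submodule.smul_mem _ _ (hW x hx)
  have hNW' : ∀ x ∈ W', (N * Φ) x ∈ W' := fun x hx => by
    rw [mul_apply, LinearMap.sum_apply]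
    exact Submodule.sum_mem _ fun i _ => pow_mapsTo hσW' i _ (hΦW' x hx)
  have hσ1W' : ∀ x ∈ W', (σ - 1) x ∈ W' := fun x hx =>
    W'.sub_mem (hσW' x hx) hx
  have hintertwine : (σ - 1) * (N * Φ) = Φ * (σ - 1) :=
    sub_one_mul_geom_sum_mul_of_mul_eq_pow_mul h
  have hrestrict : (N * Φ).restrict hNW = (q : K) • Φ.restrict hW := by
    ext x
    simp [hfix x x.2]
  have hconj : ((N * Φ).restrict hNW').charpoly = (Φ.restrict hΦW').charpoly := by
    refine charpoly_eq_of_comp_eq_comp (s := (σ - 1).restrict hσ1W') ?_ ?_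
    · exact (injective_restrict_iff _).2 hcompl.symm.disjoint
    · ext x
      rw [LinearMap.comp_apply, LinearMap.comp_apply, coe_restrict_apply, coe_restrict_apply,
        coe_restrict_apply, coe_restrict_apply]
      exact LinearMap.congr_fun hintertwine x
  rw [charpoly_eq_mul_of_isCompl hcompl Φ hW hΦW', charpoly_eq_mul_of_isCompl hcompl _ hNW hNW',
    hrestrict, hconj]
  ring

end Module.End

theorem charpolyRev_mul_eq_of_semisimple_general
    {K : Type*} [Field K] (n q : ℕ)
    (σ Φ : Matrix (Fin n) (Fin n) K)
    (hΦ : IsUnit Φ)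
    (hconj : Φ * σ = σ ^ q * Φ)
    (hss : ∀ U : Submodule K (Fin n → K),
      U.map σ.mulVecLin ≤ U → U.map Φ.mulVecLin ≤ U →
      ∃ U' : Submodule K (Fin n → K),
        U'.map σ.mulVecLin ≤ U' ∧ U'.map Φ.mulVecLin ≤ U' ∧ IsCompl U U') :
    ∃ hW : ∀ x ∈ LinearMap.ker (σ - 1).mulVecLin,
        Φ.mulVecLin x ∈ LinearMap.ker (σ - 1).mulVecLin,
      Matrix.charpolyRev Φ *
        (Matrix.charpolyRev
          (LinearMap.toMatrix (Module.finBasis K (LinearMap.ker (σ - 1).mulVecLin))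
            (Module.finBasis K (LinearMap.ker (σ - 1).mulVecLin))
            (Φ.mulVecLin.restrict hW))).comp (C (q : K) * X)
      = Matrix.charpolyRev ((∑ i ∈ Finset.range q, σ ^ i) * Φ) *
        Matrix.charpolyRev
          (LinearMap.toMatrix (Module.finBasis K (LinearMap.ker (σ - 1).mulVecLin))
            (Module.finBasis K (LinearMap.ker (σ - 1).mulVecLin))
            (Φ.mulVecLin.restrict hW)) := by
  obtain ⟨e, he⟩ : ∃ e : Matrix (Fin n) (Fin n) K ≃ₐ[K] Module.End K (Fin n → K),
      ∀ A, A.mulVecLin = e A := ⟨toLinAlgEquiv', fun _ => rfl⟩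
  rw [he (σ - 1), he Φ, map_sub, map_one]
  rw [he σ, he Φ] at hss
  have hconj' : e Φ * e σ = e σ ^ q * e Φ := by rw [← map_pow, ← map_mul, ← map_mul, hconj]
  have hW := mapsTo_ker_sub_one_of_mul_eq_pow_mul (hΦ.map e) hconj'
  refine ⟨hW, ?_⟩
  obtain ⟨W', hσW', hΦW', hcompl⟩ := hss (ker (e σ - 1))
    (Submodule.map_le_iff_le_comap.2 mapsTo_ker_sub_one_self) (Submodule.map_le_iff_le_comap.2 hW)
  have key := charpoly_mul_charpoly_smul_restrict_ker_sub_one hconj' hW hcompl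
    (Submodule.map_le_iff_le_comap.1 hσW') (Submodule.map_le_iff_le_comap.1 hΦW')
  rw [← Matrix.charpolyRev_smul, ← map_smul, charpolyRev_toMatrix, charpolyRev_toMatrix,
    charpolyRev_eq_reverse_charpoly_mulVecLin, charpolyRev_eq_reverse_charpoly_mulVecLin, he, he,
    ← reverse_mul_of_domain, ← reverse_mul_of_domain, key]
  simp only [map_mul, map_sum, map_pow]

/-- Equation (2) of Theorem 6.2 of the paper (matrix form): let `K` be an algebraically
closed field of characteristic zero, `σ` an invertible matrix of finite order, `Φ`
invertible with `Φ σ Φ⁻¹ = σ^q`, and suppose `K^n` is semisimple over the group generated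
by `σ` and `Φ` (every `σ`- and `Φ`-stable subspace has a stable complement). Let
`W = ker (σ - 1)`. Then `W` is `Φ`-stable and, writing `Φ_W` for the restriction of `Φ`
to `W` (as a matrix in some basis of `W`),
`det(1 - X Φ) ⬝ det(1 - qX Φ_W) = det(1 - X (1 + σ + ⋯ + σ^{q-1}) Φ) ⬝ det(1 - X Φ_W)`,
where `det(1 - X M)` is the reversed characteristic polynomial `Matrix.charpolyRev`. -/
theorem charpolyRev_mul_eq_of_semisimple
    {K : Type*} [Field K] [IsAlgClosed K] [CharZero K] (n q : ℕ) (hq : 0 < q)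
    (σ Φ : Matrix (Fin n) (Fin n) K)
    (hσ : IsUnit σ) (hΦ : IsUnit Φ)
    (hfin : ∃ m : ℕ, 0 < m ∧ σ ^ m = 1)
    (hconj : Φ * σ = σ ^ q * Φ)
    (hss : ∀ U : Submodule K (Fin n → K),
      U.map σ.mulVecLin ≤ U → U.map Φ.mulVecLin ≤ U →
      ∃ U' : Submodule K (Fin n → K),
        U'.map σ.mulVecLin ≤ U' ∧ U'.map Φ.mulVecLin ≤ U' ∧ IsCompl U U') :
    ∃ hW : ∀ x ∈ LinearMap.ker (σ - 1).mulVecLin,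
        Φ.mulVecLin x ∈ LinearMap.ker (σ - 1).mulVecLin,
      Matrix.charpolyRev Φ *
        (Matrix.charpolyRev
          (LinearMap.toMatrix (Module.finBasis K (LinearMap.ker (σ - 1).mulVecLin))
            (Module.finBasis K (LinearMap.ker (σ - 1).mulVecLin))
            (Φ.mulVecLin.restrict hW))).comp (C (q : K) * X)
      = Matrix.charpolyRev ((∑ i ∈ Finset.range q, σ ^ i) * Φ) *
        Matrix.charpolyRev
          (LinearMap.toMatrix (Module.finBasis K (LinearMap.ker (σ - 1).mulVecLin))
            (Module.finBasis K (LinearMap.ker (σ - 1).mulVecLin))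
            (Φ.mulVecLin.restrict hW)) :=
  charpolyRev_mul_eq_of_semisimple_general n q σ Φ hΦ hconj hss
end

section
/- Let K be a field, let d ≥ 1, let D and E be d×d diagonal matrices over K with det(E) = 1, and let P be the permutation matrix of a permutation τ of {0,…,d−1} that is a single d-cycle. Then the characteristic polynomial of E·D·P equals the characteristic polynomial of D·P: charpoly(E·D·P) = charpoly(D·P) in K[X]. -/
open Matrix Polynomial

section Aux

variable {K : Type*} [Field K] {d : ℕ}

lemma aux_charpoly_diag_cycle (b : Fin d → K)
    (τ : Equiv.Perm (Fin d)) (hτ : τ.IsCycle) (hsupp : τ.support = Finset.univ) :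
    (Matrix.diagonal b *
        Matrix.of (fun i j => if i = τ j then (1 : K) else 0)).charpoly
      = X ^ d - C (∏ i, b i) := by
  set M : Matrix (Fin d) (Fin d) K :=
    Matrix.diagonal b * Matrix.of (fun i j => if i = τ j then (1 : K) else 0) with hM
  have hfix : ∀ i, τ i ≠ i := by
    intro i
    have : i ∈ τ.support := by rw [hsupp]; exact Finset.mem_univ i
    exact Equiv.Perm.mem_support.mp this
  have hMentry : ∀ i j, M i j = if i = τ j then b i else 0 := by
    intro i j
    simp only [hM, Matrix.diagonal_mul, Matrix.of_apply]
    split <;> simp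
  have hone : (1 : Equiv.Perm (Fin d)) ≠ τ := by
    intro h
    obtain ⟨x, hx, -⟩ := hτ
    exact hx (by rw [← h]; rfl)
  -- only σ = 1 and σ = τ contribute
  have hzero : ∀ σ : Equiv.Perm (Fin d), σ ≠ 1 → σ ≠ τ →
      ∏ i, charmatrix M (σ i) i = 0 := by
    intro σ h1 h2
    by_cases hall : ∀ i, σ i = i ∨ σ i = τ i
    · exfalso
      by_cases hS : ∀ i, σ i = i
      · exact h1 (Equiv.ext hS)
      · push_neg at hS
        obtain ⟨i0, hi0⟩ := hS
        have hinv : ∀ i, σ i ≠ i → σ (τ i) ≠ τ i := by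
          intro i hi hcontra
          have hστ : σ i = τ i := (hall i).resolve_left hi
          exact hfix i (σ.injective (hcontra.trans hστ.symm))
        have hpow : ∀ k : ℕ, σ ((τ ^ k) i0) ≠ (τ ^ k) i0 := by
          intro k
          induction k with
          | zero => simpa using hi0
          | succ n ih =>
            have := hinv _ ih
            simpa [pow_succ', Equiv.Perm.mul_apply] using this
        have hall' : ∀ j, σ j = τ j := by
          intro j
          obtain ⟨k, hk⟩ := hτ.exists_pow_eq (hfix i0 |> fun h => h) (hfix j |> fun h => h)
          exact (hall j).resolve_left (hk ▸ hpow k)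
        exact h2 (Equiv.ext hall')
    · push_neg at hall
      obtain ⟨i, hi1, hi2⟩ := hall
      apply Finset.prod_eq_zero (Finset.mem_univ i)
      rw [charmatrix_apply_ne _ _ _ hi1, hMentry, if_neg hi2]
      simp
  rw [Matrix.charpoly, Matrix.det_apply]
  rw [← Finset.sum_subset (Finset.subset_univ ({1, τ} : Finset (Equiv.Perm (Fin d))))
    (by
      intro σ _ hσ
      simp only [Finset.mem_insert, Finset.mem_singleton, not_or] at hσ
      rw [hzero σ hσ.1 hσ.2, smul_zero])]
  rw [Finset.sum_pair hone]
  have hterm1 : ∀ i, charmatrix M ((1 : Equiv.Perm (Fin d)) i) i = X - C 0 := by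
    intro i
    rw [Equiv.Perm.one_apply, charmatrix_apply_eq, hMentry, if_neg (Ne.symm (hfix i))]
  have hterm2 : ∀ i, charmatrix M (τ i) i = -C (b (τ i)) := by
    intro i
    rw [charmatrix_apply_ne _ _ _ (hfix i), hMentry, if_pos rfl]
  have hsign : Equiv.Perm.sign τ = -(-1) ^ d := by
    rw [hτ.sign, hsupp, Finset.card_univ, Fintype.card_fin]
  have hb : ∏ i, b (τ i) = ∏ i, b i := Fintype.prod_equiv τ _ _ (fun _ => rfl)
  rw [Finset.prod_congr rfl (fun i _ => hterm1 i),
      Finset.prod_congr rfl (fun i _ => hterm2 i)]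
  simp only [map_zero, sub_zero, Finset.prod_const, Finset.card_univ, Fintype.card_fin,
    Equiv.Perm.sign_one, one_smul, hsign]
  have hprodneg : (∏ i : Fin d, -C (b (τ i))) = (-1) ^ d * C (∏ i : Fin d, b i) := by
    rw [Finset.prod_congr rfl (fun i _ => (neg_one_mul (C (b (τ i)))).symm),
      Finset.prod_mul_distrib, Finset.prod_const, Finset.card_univ, Fintype.card_fin,
      ← map_prod, hb]
  rw [hprodneg, Units.smul_def]
  have h1 : ((-1 : K[X]) ^ d) * ((-1 : K[X]) ^ d) = 1 := by
    rw [← pow_add, ← two_mul, pow_mul, neg_one_sq, one_pow]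
  push_cast
  rw [zsmul_eq_mul]
  push_cast
  rw [neg_mul, ← mul_assoc, h1, one_mul, sub_eq_add_neg]

end Aux

/-- The step in case (3) of the proof of Theorem 6.2 of the paper: if `D` and `E` are
diagonal `d × d` matrices with `det E = 1` and `P` is the permutation matrix of a
`d`-cycle, then `E * D * P` and `D * P` have the same characteristic polynomial. -/
theorem charpoly_detOne_diagonal_mul_eq
    {K : Type*} [Field K] (d : ℕ) (hd : 1 ≤ d)
    (dv ev : Fin d → K) (hE : (Matrix.diagonal ev).det = 1)
    (τ : Equiv.Perm (Fin d)) (hτ : τ.IsCycle) (hsupp : τ.support = Finset.univ) :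
    (Matrix.diagonal ev * Matrix.diagonal dv *
        Matrix.of (fun i j => if i = τ j then (1 : K) else 0)).charpoly
      = (Matrix.diagonal dv * Matrix.of (fun i j => if i = τ j then (1 : K) else 0)).charpoly := by
  rw [Matrix.diagonal_mul_diagonal, aux_charpoly_diag_cycle _ τ hτ hsupp,
      aux_charpoly_diag_cycle _ τ hτ hsupp]
  rw [Matrix.det_diagonal] at hE
  congr 1
  rw [Finset.prod_mul_distrib, hE, one_mul]
end

section
/- Let ℓ be a prime number, and let R be a commutative ring that is ℓ-adically separated, i.e., ⋂_{i≥1} ℓ^i·R = (0). Let H be a profinite group such that every open normal subgroup of H has index coprime to ℓ (H has pro-order prime to ℓ). Let ρ : H → GL_n(R) be a group homomorphism such that for every i ≥ 1 the preimage under ρ of the subgroup K^i = ker(GL_n(R) → GL_n(R/ℓ^i R)) is open in H. Then the image ρ(H) is a finite group. -/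
/-!
Let `Nᵢ = ρ⁻¹(Kⁱ)`, an open normal subgroup of `H`. If `g ≡ 1 mod ℓⁱ` with `i ≥ 1`, then
`g^ℓ ≡ 1 mod ℓⁱ⁺¹` (binomial theorem, `ℓ` prime). Since `H/Nᵢ₊₁` has order prime to `ℓ`, every
`h ∈ H` is an `ℓ`-th power of a power of itself modulo `Nᵢ₊₁`; hence `Nᵢ ≤ Nᵢ₊₁`, and so `N₁`
lies in every `Nᵢ`. By `ℓ`-adic separatedness `N₁ ≤ ker ρ`, so `ker ρ` is open, hence of finite
index in the compact group `H`.
-/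

theorem natCast_pow_succ_dvd_pow_sub_one {S : Type*} [Ring S] {p i : ℕ} (hp : p.Prime)
    (hi : 1 ≤ i) {a : S} (ha : (p : S) ^ i ∣ a - 1) : (p : S) ^ (i + 1) ∣ a ^ p - 1 := by
  obtain ⟨b, hb⟩ := ha
  obtain ⟨r, hr⟩ := (Commute.one_left ((p : S) ^ i * b)).exists_add_pow_prime_eq hp
  have hip : i + 1 ≤ i * p := by nlinarith [hp.two_le]
  rw [eq_add_of_sub_eq' hb, hr, one_pow, add_assoc, add_sub_cancel_left,
    ((Nat.cast_commute p b).pow_left i).mul_pow, ← pow_mul]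
  refine dvd_add ((pow_dvd_pow _ hip).mul_right _) ⟨b * r, ?_⟩
  rw [mul_one, ← mul_assoc, ← pow_succ', mul_assoc]

theorem Subgroup.le_of_forall_pow_mem {G : Type*} [Group G] {A B : Subgroup G} [B.Normal]
    {ℓ : ℕ} (hB : B.index.Coprime ℓ) (hpow : ∀ x ∈ A, x ^ ℓ ∈ B) : A ≤ B := by
  intro g hg
  have hcop : ℓ.Coprime (orderOf (g : G ⧸ B)) :=
    (hB.coprime_dvd_left (B.index_eq_card ▸ _root_.orderOf_dvd_natCard _)).symm
  obtain ⟨m, hm⟩ := exists_pow_eq_self_of_coprime hcop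
  have hquot : ((g ^ m) ^ ℓ)⁻¹ * g ∈ B := by
    rw [← QuotientGroup.eq, QuotientGroup.mk_pow, QuotientGroup.mk_pow, ← pow_mul, mul_comm,
      pow_mul, hm]
  simpa using mul_mem (hpow _ (pow_mem hg m)) hquot

theorem MonoidHom.finite_range_of_isOpen_ker {G M : Type*} [Group G] [TopologicalSpace G]
    [SeparatelyContinuousMul G] [CompactSpace G] [Group M] (f : G →* M)
    (hf : IsOpen (f.ker : Set G)) : (Set.range f).Finite := by
  have := Subgroup.quotient_finite_of_isOpen _ hf
  have : Finite f.range := .of_equiv _ (QuotientGroup.quotientKerEquivRange f).toEquiv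
  exact f.coe_range ▸ Set.toFinite _

namespace Matrix.GeneralLinearGroup

variable {n R : Type*} [Fintype n] [DecidableEq n] [CommRing R]

variable (n) in
def congruenceSubgroup (I : Ideal R) : Subgroup (GL n R) :=
  (map (Ideal.Quotient.mk I)).ker

instance (I : Ideal R) : (congruenceSubgroup n I).Normal :=
  MonoidHom.normal_ker _

theorem mem_congruenceSubgroup_iff {I : Ideal R} {g : GL n R} :
    g ∈ congruenceSubgroup n I ↔ ∀ j k, ((g : Matrix n n R) - 1) j k ∈ I := by
  have hmap : ((map (Ideal.Quotient.mk I) g : GL n (R ⧸ I)) : Matrix n n (R ⧸ I)) - 1 =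
      ((g : Matrix n n R) - 1).map (Ideal.Quotient.mk I) := by
    rw [Matrix.map_sub _ (map_sub _), Matrix.map_one _ (map_zero _) (map_one _)]
    rfl
  simp only [congruenceSubgroup, MonoidHom.mem_ker, Units.ext_iff, Units.val_one,
    ← sub_eq_zero (b := (1 : Matrix n n (R ⧸ I))), hmap, ← Matrix.ext_iff, Matrix.map_apply,
    Matrix.zero_apply, Ideal.Quotient.eq_zero_iff_mem]

theorem mem_congruenceSubgroup_span_singleton_iff {x : R} {g : GL n R} :
    g ∈ congruenceSubgroup n (Ideal.span {x}) ↔ Matrix.scalar n x ∣ (g : Matrix n n R) - 1 := by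
  simp only [mem_congruenceSubgroup_iff, Ideal.mem_span_singleton]
  constructor
  · intro h
    choose B hB using h
    exact ⟨Matrix.of B, by ext j k; simp [scalar_apply, hB j k]⟩
  · rintro ⟨B, hB⟩ j k
    exact ⟨B j k, by rw [hB, Matrix.scalar_apply, diagonal_mul]⟩

theorem pow_mem_congruenceSubgroup_succ {ℓ i : ℕ} (hℓ : ℓ.Prime) (hi : 1 ≤ i) {g : GL n R}
    (hg : g ∈ congruenceSubgroup n (Ideal.span {(ℓ : R) ^ i})) :
    g ^ ℓ ∈ congruenceSubgroup n (Ideal.span {(ℓ : R) ^ (i + 1)}) := by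
  simp only [mem_congruenceSubgroup_span_singleton_iff, map_pow, map_natCast,
    Units.val_pow_eq_pow_val] at hg ⊢
  exact natCast_pow_succ_dvd_pow_sub_one hℓ hi hg

theorem eq_one_of_forall_mem_congruenceSubgroup {x : R}
    (hsep : ∀ a : R, (∀ i : ℕ, 1 ≤ i → a ∈ Ideal.span {x ^ i}) → a = 0) {g : GL n R}
    (hg : ∀ i : ℕ, 1 ≤ i → g ∈ congruenceSubgroup n (Ideal.span {x ^ i})) : g = 1 := by
  ext j k
  rw [← sub_eq_zero, ← Matrix.sub_apply]
  exact hsep _ fun i hi => mem_congruenceSubgroup_iff.mp (hg i hi) j k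

end Matrix.GeneralLinearGroup

open Matrix.GeneralLinearGroup in
theorem image_finite_of_prime_to_ell_proorder_general
    (ℓ : ℕ) (hℓ : ℓ.Prime) {R : Type*} [CommRing R]
    (hsep : ∀ a : R, (∀ i : ℕ, 1 ≤ i → a ∈ Ideal.span {(ℓ : R) ^ i}) → a = 0)
    {H : Type*} [Group H] [TopologicalSpace H] [IsTopologicalGroup H]
    [CompactSpace H]
    (horder : ∀ U : Subgroup H, U.Normal → IsOpen (U : Set H) → Nat.Coprime U.index ℓ)
    (n : ℕ) (ρ : H →* GL (Fin n) R)
    (hcont : ∀ i : ℕ, 1 ≤ i →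
      IsOpen (ρ ⁻¹' ((MonoidHom.ker
        (Matrix.GeneralLinearGroup.map (n := Fin n)
          (Ideal.Quotient.mk (Ideal.span {(ℓ : R) ^ i})))) : Set (GL (Fin n) R)))) :
    (Set.range ρ).Finite := by
  let N (i : ℕ) : Subgroup H := (congruenceSubgroup (Fin n) (Ideal.span {(ℓ : R) ^ i})).comap ρ
  have (i : ℕ) : (N i).Normal := Subgroup.normal_comap ρ
  have hstep (i : ℕ) (hi : 1 ≤ i) : N i ≤ N (i + 1) :=
    Subgroup.le_of_forall_pow_mem (horder _ inferInstance (hcont (i + 1) (by omega)))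
      fun _ hh => by simpa only [N, Subgroup.mem_comap, map_pow] using
        pow_mem_congruenceSubgroup_succ hℓ hi hh
  have hchain (i : ℕ) (hi : 1 ≤ i) : N 1 ≤ N i := by
    induction i, hi using Nat.le_induction with
    | base => exact le_rfl
    | succ i hi ih => exact ih.trans (hstep i hi)
  have hker : N 1 ≤ ρ.ker := fun h hh =>
    eq_one_of_forall_mem_congruenceSubgroup hsep fun i hi => hchain i hi hh
  exact ρ.finite_range_of_isOpen_ker (Subgroup.isOpen_mono hker (hcont 1 le_rfl))

/-- Lemma 2.2 of the paper: let `R` be an `ℓ`-adically separated commutative ring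
(`⋂_{i ≥ 1} ℓ^i R = 0`), let `H` be a profinite group of pro-order prime to `ℓ` (every
open normal subgroup has index coprime to `ℓ`), and let `ρ : H → GL_n(R)` be a
homomorphism such that the preimage of each congruence subgroup
`K^i = ker (GL_n(R) → GL_n(R/ℓ^i R))` is open in `H`. Then `ρ(H)` is finite. -/
theorem image_finite_of_prime_to_ell_proorder
    (ℓ : ℕ) (hℓ : ℓ.Prime) {R : Type*} [CommRing R]
    (hsep : ∀ a : R, (∀ i : ℕ, 1 ≤ i → a ∈ Ideal.span {(ℓ : R) ^ i}) → a = 0)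
    {H : Type*} [Group H] [TopologicalSpace H] [IsTopologicalGroup H]
    [CompactSpace H] [T2Space H] [TotallyDisconnectedSpace H]
    (horder : ∀ U : Subgroup H, U.Normal → IsOpen (U : Set H) → Nat.Coprime U.index ℓ)
    (n : ℕ) (ρ : H →* GL (Fin n) R)
    (hcont : ∀ i : ℕ, 1 ≤ i →
      IsOpen (ρ ⁻¹' ((MonoidHom.ker
        (Matrix.GeneralLinearGroup.map (n := Fin n)
          (Ideal.Quotient.mk (Ideal.span {(ℓ : R) ^ i})))) : Set (GL (Fin n) R)))) :
    (Set.range ρ).Finite :=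
  image_finite_of_prime_to_ell_proorder_general ℓ hℓ hsep horder n ρ hcont
end

section
/- Let R be a Noetherian commutative ring and let a, b ∈ R. Suppose that for every maximal ideal 𝔪 of R, the image of a in the 𝔪R_𝔪-adic completion of the localization R_𝔪 lies in the ideal generated by the image of b. Then a lies in the ideal b·R of R. -/
/-- Local version: in a Noetherian local ring `S`, if the image of `a` in the
`𝔪`-adic completion lies in the ideal generated by the image of `b`, then `a ∈ (b)`. -/
theorem local_mem_span_of_completion
    {S : Type*} [CommRing S] [IsNoetherianRing S] [IsLocalRing S] (a b : S)
    (h : algebraMap S (AdicCompletion (IsLocalRing.maximalIdeal S) S) a ∈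
      Ideal.span {algebraMap S (AdicCompletion (IsLocalRing.maximalIdeal S) S) b}) :
    a ∈ Ideal.span {b} := by
  set m := IsLocalRing.maximalIdeal S with hm
  rw [Ideal.mem_span_singleton'] at h
  obtain ⟨x, hx⟩ := h
  have key : ∀ n : ℕ, a ∈ Ideal.span {b} ⊔ m ^ n := by
    intro n
    obtain ⟨c, hc⟩ := Ideal.Quotient.mk_surjective (I := m ^ n) (AdicCompletion.evalₐ m n x)
    have hcomm := congrArg (AdicCompletion.evalₐ m n) hx
    rw [map_mul, AlgHom.commutes, AlgHom.commutes, ← hc] at hcomm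
    have : Ideal.Quotient.mk (m ^ n) (c * b) = Ideal.Quotient.mk (m ^ n) a := by
      rw [map_mul]; exact hcomm
    have hmem : a - c * b ∈ m ^ n := by
      rw [← Ideal.Quotient.eq_zero_iff_mem, map_sub, this, sub_self]
    have : a = c * b + (a - c * b) := by ring
    rw [this]
    exact Submodule.add_mem _
      (Ideal.mem_sup_left (Ideal.mem_span_singleton'.2 ⟨c, rfl⟩))
      (Ideal.mem_sup_right hmem)
  by_cases hb : Ideal.span {b} = ⊤
  · simp [hb]
  -- pass to the quotient ring
  have : Nontrivial (S ⧸ Ideal.span {b}) := Ideal.Quotient.nontrivial_iff.mpr hb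
  have : IsLocalRing (S ⧸ Ideal.span {b}) :=
    IsLocalRing.of_surjective' (Ideal.Quotient.mk _) Ideal.Quotient.mk_surjective
  have : IsNoetherianRing (S ⧸ Ideal.span {b}) := inferInstance
  set f := Ideal.Quotient.mk (Ideal.span {b})
  have hmap : ∀ n : ℕ, f a ∈ (m.map f) ^ n := by
    intro n
    have := Ideal.mem_map_of_mem f (key n)
    rwa [Ideal.map_sup, Ideal.map_pow,
      show Ideal.map f (Ideal.span {b}) = ⊥ by
        rw [Ideal.map_span]
        simp [f, Ideal.Quotient.eq_zero_iff_mem, Ideal.mem_span_singleton_self],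
      bot_sup_eq] at this
  have hker : RingHom.ker f ≤ m := by
    rw [Ideal.mk_ker]
    exact (Ideal.span_singleton_le_iff_mem m).2
      (IsLocalRing.le_maximalIdeal hb (Ideal.mem_span_singleton_self b))
  have htop : m.map f ≠ ⊤ := by
    intro htop
    have h2 := Ideal.comap_map_of_surjective f Ideal.Quotient.mk_surjective m
    rw [htop, Ideal.comap_top, ← RingHom.ker, sup_eq_left.2 hker] at h2
    exact (IsLocalRing.maximalIdeal.isMaximal S).ne_top h2.symm
  have : f a ∈ (⨅ n : ℕ, (m.map f) ^ n) := Ideal.mem_iInf.2 hmap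
  rw [Ideal.iInf_pow_eq_bot_of_isLocalRing _ htop] at this
  rwa [Ideal.mem_bot, Ideal.Quotient.eq_zero_iff_mem] at this

/-- Globalization of the completion lemma used in the proof of Proposition 5.2 of the
paper: let `R` be Noetherian and `a, b ∈ R`. If for every maximal ideal `𝔪` the image of
`a` in the `𝔪R_𝔪`-adic completion of the localization `R_𝔪` lies in the ideal generated
by the image of `b`, then `a ∈ b R`. -/
theorem mem_span_of_forall_localization_completion
    {R : Type*} [CommRing R] [IsNoetherianRing R] (a b : R)
    (h : ∀ (𝔪 : Ideal R) [𝔪.IsMaximal],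
      algebraMap (Localization.AtPrime 𝔪)
          (AdicCompletion (IsLocalRing.maximalIdeal (Localization.AtPrime 𝔪))
            (Localization.AtPrime 𝔪))
          (algebraMap R (Localization.AtPrime 𝔪) a) ∈
        Ideal.span {algebraMap (Localization.AtPrime 𝔪)
          (AdicCompletion (IsLocalRing.maximalIdeal (Localization.AtPrime 𝔪))
            (Localization.AtPrime 𝔪))
          (algebraMap R (Localization.AtPrime 𝔪) b)}) :
    a ∈ Ideal.span {b} := by
  apply Ideal.mem_of_localization_maximal
  intro P hP
  have : IsNoetherianRing (Localization.AtPrime P) :=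
    IsLocalization.isNoetherianRing P.primeCompl _ ‹_›
  rw [Ideal.map_span, Set.image_singleton]
  exact local_mem_span_of_completion _ _ (h P)
end
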